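/- arXiv:1810.03329 — 4 statements merged into one kernel-verified Lean document; each statement's English description precedes it below -/
import Mathlib

section
/- For any commutative ring R with 1, ideal I, and n ≥ 3: if ε ∈ E_n(R, I), then there exists ε̃ ∈ E_n(R ⊕ I) with φ(ε̃) = ε, where φ is applied entrywise. -/
/-- The set of elementary generators `e_{ij}(x)`, `x ∈ J`, inside the units of the
matrix ring. -/
def elemGens (n : ℕ) (S : Type) [CommRing S] (J : Ideal S) :
    Set (Matrix (Fin n) (Fin n) S)ˣ :=
  {g | ∃ i j : Fin n, i ≠ j ∧ ∃ x ∈ J,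
    (g : Matrix (Fin n) (Fin n) S) = 1 + Matrix.single i j x}

/-- The elementary subgroup `E_n(S)`. -/
def En (n : ℕ) (S : Type) [CommRing S] : Subgroup (Matrix (Fin n) (Fin n) S)ˣ :=
  Subgroup.closure (elemGens n S ⊤)

/-- The relative elementary subgroup `E_n(S, J)`: the normal closure of `E_n(J)`
in `E_n(S)`. -/
def relEn (n : ℕ) (S : Type) [CommRing S] (J : Ideal S) :
    Subgroup (Matrix (Fin n) (Fin n) S)ˣ :=
  Subgroup.closure
    {h | ∃ ε ∈ En n S, ∃ g ∈ Subgroup.closure (elemGens n S J), h = ε * g * ε⁻¹}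

/-!
Since `E_n(R, I) ≤ E_n(R)`, it suffices to lift `E_n(R)`. The map `φ` is surjective, so each
generator `e_{ij}(x)` of `E_n(R)` is the image of the generator `e_{ij}(x ⊕ 0)` of `E_n(R ⊕ I)`,
and the image of `E_n(R ⊕ I)` is a subgroup containing all of them.
-/

section Elementary

variable {n : ℕ} {S T : Type} [CommRing S] [CommRing T]

lemma elemGens_mono {J K : Ideal S} (hJK : J ≤ K) : elemGens n S J ⊆ elemGens n S K := by
  rintro g ⟨i, j, hij, x, hx, hg⟩
  exact ⟨i, j, hij, x, hJK hx, hg⟩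

lemma relEn_le_En (J : Ideal S) : relEn n S J ≤ En n S := by
  rw [relEn, Subgroup.closure_le]
  rintro h ⟨ε, hε, g, hg, rfl⟩
  have hg' : g ∈ En n S := Subgroup.closure_mono (elemGens_mono le_top) hg
  exact mul_mem (mul_mem hε hg') (inv_mem hε)

lemma isUnit_one_add_single {i j : Fin n} (hij : i ≠ j) (x : S) :
    IsUnit (1 + Matrix.single i j x) := by
  rw [Matrix.isUnit_iff_isUnit_det]
  exact (Matrix.det_transvection_of_ne i j hij x).symm ▸ isUnit_one

lemma En_le_map_of_surjective {ψ : S →+* T} (hψ : Function.Surjective ψ) :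
    En n T ≤ (En n S).map (Units.map ψ.mapMatrix.toMonoidHom) := by
  rw [En, Subgroup.closure_le]
  rintro g ⟨i, j, hij, x, -, hg⟩
  obtain ⟨y, rfl⟩ := hψ x
  refine ⟨(isUnit_one_add_single hij y).unit,
    Subgroup.subset_closure ⟨i, j, hij, y, trivial, rfl⟩, Units.ext ?_⟩
  simp [hg, Matrix.map_add, Matrix.map_single]

end Elementary

theorem relElementary_lifts_to_excision_general (n : ℕ) (R : Type) [CommRing R]
    (I : Ideal R) [inst : CommRing (R × ↥I)]
    (φ : (R × ↥I) →+* R) (hφ : ∀ a : R × ↥I, φ a = a.1 + (a.2 : R))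
    (ε : (Matrix (Fin n) (Fin n) R)ˣ) (hε : ε ∈ relEn n R I) :
    ∃ ε' ∈ En n (R × ↥I),
      ((ε' : Matrix (Fin n) (Fin n) (R × ↥I)).map ⇑φ) =
        (ε : Matrix (Fin n) (Fin n) R) := by
  have hφ_surj : Function.Surjective φ := fun x => ⟨(x, 0), by simp [hφ]⟩
  obtain ⟨ε', hε', hlift⟩ := En_le_map_of_surjective hφ_surj (relEn_le_En I hε)
  exact ⟨ε', hε', congrArg Units.val hlift⟩

/-- Every `ε ∈ E_n(R, I)` lifts along the entrywise excision map
`φ` to some `ε̃ ∈ E_n(R ⊕ I)`. -/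
theorem relElementary_lifts_to_excision (n : ℕ) (hn : 3 ≤ n) (R : Type) [CommRing R]
    (I : Ideal R) [inst : CommRing (R × ↥I)]
    (hadd : ∀ a b : R × ↥I, a + b = (a.1 + b.1, a.2 + b.2))
    (hmul : ∀ a b : R × ↥I, (a * b).1 = a.1 * b.1 ∧
      ((a * b).2 : R) = b.1 * (a.2 : R) + a.1 * (b.2 : R) + (a.2 : R) * (b.2 : R))
    (hone : (1 : R × ↥I).1 = 1 ∧ ((1 : R × ↥I).2 : R) = 0)
    (φ : (R × ↥I) →+* R) (hφ : ∀ a : R × ↥I, φ a = a.1 + (a.2 : R))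
    (ε : (Matrix (Fin n) (Fin n) R)ˣ) (hε : ε ∈ relEn n R I) :
    ∃ ε' ∈ En n (R × ↥I),
      ((ε' : Matrix (Fin n) (Fin n) (R × ↥I)).map ⇑φ) =
        (ε : Matrix (Fin n) (Fin n) R) :=
  relElementary_lifts_to_excision_general n R I (inst := inst) φ hφ ε hε
end

section
/- Let R be a commutative Noetherian ring and s ∈ R. Then there exists a natural number k such that the canonical map GL_n(R, s^k R) → GL_n(R_s) induced by localization at s is injective. -/
/-!
The kernel of `R → R_s` is the union of the annihilators of the powers of `s`. In a Noetherian
ring this chain stabilises, and for `k` large the annihilator of `s ^ k` meets `s ^ k R` only in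
`0` (Fitting's lemma for multiplication by `s`). So `R → R_s` is injective on `s ^ k R`, and two
matrices congruent to `1` modulo `s ^ k` differ entrywise by elements of `s ^ k R`.
-/

open Filter

theorem LinearMap.range_mulLeft_eq_span_singleton {R : Type*} [CommSemiring R] (a : R) :
    LinearMap.range (LinearMap.mulLeft R a) = Ideal.span {a} := by
  ext x
  simp [Ideal.mem_span_singleton', mul_comm]

theorem IsLocalization.Away.eventually_disjoint_span_pow_ker_algebraMap {R S : Type*}
    [CommRing R] [IsNoetherianRing R] [CommRing S] [Algebra R S] (s : R)
    [IsLocalization.Away s S] :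
    ∀ᶠ k in atTop, Disjoint (Ideal.span {s ^ k}) (RingHom.ker (algebraMap R S)) := by
  let f : Module.End R R := LinearMap.mulLeft R s
  filter_upwards [f.eventually_disjoint_ker_pow_range_pow, f.eventually_iSup_ker_pow_eq]
    with k hdisj hsup
  have hker : RingHom.ker (algebraMap R S) ≤ ⨆ m, LinearMap.ker (f ^ m) := by
    intro x hx
    obtain ⟨⟨_, m, rfl⟩, hm⟩ :=
      (IsLocalization.map_eq_zero_iff (Submonoid.powers s) S x).mp hx
    exact Submodule.mem_iSup_of_mem m (by simpa [f, LinearMap.pow_mulLeft] using hm)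
  rw [hsup, LinearMap.pow_mulLeft] at hker
  rw [LinearMap.pow_mulLeft, LinearMap.range_mulLeft_eq_span_singleton] at hdisj
  exact hdisj.symm.mono_right hker

theorem Matrix.injOn_units_map_mapMatrix_of_disjoint_ker {n R S : Type*} [Fintype n]
    [DecidableEq n] [Ring R] [Ring S] (φ : R →+* S) (I : Ideal R)
    (hI : Disjoint I (RingHom.ker φ)) :
    Set.InjOn (Units.map (φ.mapMatrix (m := n)).toMonoidHom)
      {α : (Matrix n n R)ˣ | ∀ i j, (α : Matrix n n R) i j - (1 : Matrix n n R) i j ∈ I} := by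
  intro α hα β hβ h
  ext i j : 2
  have hdiff : (α : Matrix n n R) i j - (β : Matrix n n R) i j ∈ I := by
    simpa using I.sub_mem (hα i j) (hβ i j)
  have hmap : φ ((α : Matrix n n R) i j - (β : Matrix n n R) i j) = 0 := by
    simpa [sub_eq_zero] using congrArg (fun u : (Matrix n n S)ˣ ↦ (u : Matrix n n S) i j) h
  exact sub_eq_zero.mp (Submodule.disjoint_def.mp hI _ hdiff hmap)

/-- for a Noetherian commutative ring `R` and `s ∈ R`, there is a
`k` such that the localization map `GL_n(R, s^k R) → GL_n(R_s)` is injective. -/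
theorem localization_injective_on_congruence (R : Type) [CommRing R]
    [IsNoetherianRing R] (s : R) (n : ℕ) :
    ∃ k : ℕ, Set.InjOn
      (Units.map ((algebraMap R (Localization.Away s)).mapMatrix.toMonoidHom :
        Matrix (Fin n) (Fin n) R →* Matrix (Fin n) (Fin n) (Localization.Away s)))
      {α : (Matrix (Fin n) (Fin n) R)ˣ | ∀ i j : Fin n,
        (α : Matrix (Fin n) (Fin n) R) i j - (1 : Matrix (Fin n) (Fin n) R) i j ∈
          Ideal.span {s ^ k}} := by
  obtain ⟨k, hk⟩ := (IsLocalization.Away.eventually_disjoint_span_pow_ker_algebraMap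
    (S := Localization.Away s) s).exists
  exact ⟨k, Matrix.injOn_units_map_mapMatrix_of_disjoint_ker _ _ hk⟩
end

section
/- Let R be a commutative ring, I an ideal, n ≥ 3. If E_n(R,I) is a normal subgroup of GL_n(R), then for every v ∈ GL_n(R)·e_1 with v ≡ e_1 mod I and every w ∈ I^n with w^t v = 0, the matrix I_n + v·w^t lies in E_n(R,I). -/
/-! The row transvection `1 + e₁ uᵗ` with `u ∈ Iⁿ` and `u₁ = 0` is the product of the
elementary matrices `e_{1k}(u_k)`, so it lies in `E_n(R, I)`. Writing `v = γ e₁` with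
`γ ∈ GL_n(R)` and `u = wᵗ γ`, the condition `wᵗ v = 0` says `u₁ = 0`, and conjugating by `γ` gives
`γ (1 + e₁ uᵗ) γ⁻¹ = 1 + v wᵗ`, which lies in `E_n(R, I)` by normality. -/

open Matrix

namespace Matrix

variable {m : Type*} [DecidableEq m] {R : Type*}

theorem one_add_vecMulVec_mul_one_add_vecMulVec [Fintype m] [Semiring R] {u a : m → R}
    (b : m → R) (h : a ⬝ᵥ u = 0) :
    (1 + vecMulVec u a) * (1 + vecMulVec u b) = 1 + vecMulVec u (a + b) := by
  rw [mul_add, add_mul, add_mul, vecMulVec_mul_vecMulVec, h, zero_smul, vecMulVec_zero,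
    vecMulVec_add]
  simp only [one_mul, mul_one, add_zero]
  abel

theorem units_mul_one_add_vecMulVec_mul_inv [Fintype m] [Semiring R] (γ : (Matrix m m R)ˣ)
    (u w : m → R) :
    (γ : Matrix m m R) * (1 + vecMulVec u w) * ((γ⁻¹ : (Matrix m m R)ˣ) : Matrix m m R) =
      1 + vecMulVec (↑γ *ᵥ u) (w ᵥ* ((γ⁻¹ : (Matrix m m R)ˣ) : Matrix m m R)) := by
  rw [mul_add, add_mul, mul_one, γ.mul_inv, mul_vecMulVec, vecMulVec_mul]

def oneAddVecMulVecUnit [Fintype m] [Ring R] (u w : m → R) (h : w ⬝ᵥ u = 0) :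
    (Matrix m m R)ˣ where
  val := 1 + vecMulVec u w
  inv := 1 + vecMulVec u (-w)
  val_inv := by
    rw [one_add_vecMulVec_mul_one_add_vecMulVec _ h, add_neg_cancel, vecMulVec_zero, add_zero]
  inv_val := by
    rw [one_add_vecMulVec_mul_one_add_vecMulVec _ (by rw [neg_dotProduct, h, neg_zero]),
      neg_add_cancel, vecMulVec_zero, add_zero]

theorem vecMulVec_single_one_single [MulZeroOneClass R] (i j : m) (x : R) :
    vecMulVec (Pi.single i 1) (Pi.single j x) = single i j x := by
  ext k l
  by_cases hik : i = k <;> simp [vecMulVec_apply, single_apply, Pi.single_apply, eq_comm, hik]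

end Matrix

variable {n : ℕ} {R : Type} [CommRing R]

theorem closure_elemGens_le_relEn (J : Ideal R) :
    Subgroup.closure (elemGens n R J) ≤ relEn n R J := fun g hg =>
  Subgroup.subset_closure ⟨1, one_mem _, g, hg, by simp⟩

theorem exists_mem_closure_elemGens_eq_one_add_vecMulVec_single (I : Ideal R) (i : Fin n)
    (u : Fin n → R) (hui : u i = 0) (huI : ∀ k, u k ∈ I) :
    ∃ g ∈ Subgroup.closure (elemGens n R I),
      (g : Matrix (Fin n) (Fin n) R) = 1 + vecMulVec (Pi.single i 1) u := by
  let P : (Fin n → R) → Prop := fun x => x ⬝ᵥ Pi.single i 1 = 0 ∧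
    ∃ g ∈ Subgroup.closure (elemGens n R I),
      (g : Matrix (Fin n) (Fin n) R) = 1 + vecMulVec (Pi.single i 1) x
  have zero : P 0 := ⟨zero_dotProduct _, 1, one_mem _, by simp⟩
  have add : ∀ x y, P x → P y → P (x + y) := by
    rintro x y ⟨hx, g, hg, hgx⟩ ⟨hy, h, hh, hhy⟩
    refine ⟨by rw [add_dotProduct, hx, hy, add_zero], g * h, mul_mem hg hh, ?_⟩
    rw [Units.val_mul, hgx, hhy, one_add_vecMulVec_mul_one_add_vecMulVec _ hx]
  have single : ∀ k, P (Pi.single k (u k)) := by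
    intro k
    by_cases hk : k = i
    · rw [hk, hui, Pi.single_zero]
      exact zero
    have hdot : Pi.single k (u k) ⬝ᵥ Pi.single i (1 : R) = 0 := by
      rw [dotProduct_single, Pi.single_eq_of_ne (Ne.symm hk), zero_mul]
    refine ⟨hdot, oneAddVecMulVecUnit _ _ hdot, Subgroup.subset_closure ?_, rfl⟩
    exact ⟨i, k, Ne.symm hk, u k, huI k, by
      rw [← vecMulVec_single_one_single]; rfl⟩
  have hu : P u := Finset.univ_sum_single u ▸
    Finset.sum_induction _ P add zero fun k _ => single k
  exact hu.2

/-- if `E_n(R,I)` is normal in `GL_n(R)`, then for every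
`v ∈ GL_n(R)·e_1` with `v ≡ e_1 mod I` and `w ∈ I^n` with `wᵗv = 0`, one has
`I_n + v·wᵗ ∈ E_n(R,I)`. -/
theorem normality_implies_transvection (n : ℕ) (hn : 3 ≤ n) (R : Type)
    [CommRing R] (I : Ideal R)
    (hnormal : (relEn n R I).Normal)
    (v w : Fin n → R)
    (hv : ∃ γ : (Matrix (Fin n) (Fin n) R)ˣ,
      v = (γ : Matrix (Fin n) (Fin n) R).mulVec (Pi.single (⟨0, by omega⟩ : Fin n) 1))
    (hw : ∀ k, w k ∈ I)
    (hvw : dotProduct w v = 0) :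
    ∃ g ∈ relEn n R I,
      (g : Matrix (Fin n) (Fin n) R) = 1 + Matrix.vecMulVec v w := by
  obtain ⟨γ, rfl⟩ := hv
  set i : Fin n := ⟨0, by omega⟩
  have hui : (w ᵥ* (γ : Matrix (Fin n) (Fin n) R)) i = 0 := by
    rw [← hvw, dotProduct_mulVec, dotProduct_single, mul_one]
  have huI : ∀ k, (w ᵥ* (γ : Matrix (Fin n) (Fin n) R)) k ∈ I := fun k => by
    simp only [vecMul, dotProduct]
    exact Ideal.sum_mem I fun j _ => I.mul_mem_right _ (hw j)
  obtain ⟨g, hg, hg_eq⟩ :=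
    exists_mem_closure_elemGens_eq_one_add_vecMulVec_single I i _ hui huI
  refine ⟨γ * g * γ⁻¹, hnormal.conj_mem g (closure_elemGens_le_relEn I hg) γ, ?_⟩
  rw [Units.val_mul, Units.val_mul, hg_eq, units_mul_one_add_vecMulVec_mul_inv, vecMul_vecMul,
    γ.mul_inv, vecMul_one]
end

section
/- Let R be a commutative ring, I an ideal, n ≥ 3, and let α(X) ∈ GL_n(R[X]) with α(X) ≡ I_n mod I[X] and α(0) = I_n. Suppose for some non-nilpotent s ∈ R the conclusion α(bX) ∈ E_n(R[X], I[X]) holds for all b ∈ s^l R with l ≫ 0 (Dilation). Then from such dilation data over a finite cover s_1, …, s_r with (s_1, …, s_r) = R and b_1 + ⋯ + b_r = 1, b_i ∈ s_i^l R, one obtains the factorization α(X) = (∏_{i=1}^{r−1} θ(b_i X, T)|_{T = b_{i+1}X + ⋯ + b_r X}) · θ(b_r X, 0), where θ(X,T) = α(X+T)·α(T)^{-1}. -/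
/-! With `F i := α((b_i + ⋯ + b_r) X)`, the `i`-th factor is `F i / F (i + 1)`, so the product
telescopes to `F 0 / F (r - 1) = α(X) / α(b_r X)`, which the last factor `θ(b_r X, 0) = α(b_r X)`
cancels. -/

open Polynomial

/-- Substitution `X ↦ p` applied entrywise to an invertible matrix of
polynomials: `α(X) ↦ α(p)`. -/
noncomputable def evalGL (n : ℕ) (R : Type) [CommRing R]
    (α : (Matrix (Fin n) (Fin n) R[X])ˣ) (p : R[X]) :
    (Matrix (Fin n) (Fin n) R[X])ˣ :=
  Units.map ((aeval p).toRingHom.mapMatrix.toMonoidHom) α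

/-- `θ(X,T) = α(X+T)·α(T)⁻¹`, evaluated at polynomials `p`, `q`. -/
noncomputable def theta (n : ℕ) (R : Type) [CommRing R]
    (α : (Matrix (Fin n) (Fin n) R[X])ˣ) (p q : R[X]) :
    (Matrix (Fin n) (Fin n) R[X])ˣ :=
  evalGL n R α (p + q) * (evalGL n R α q)⁻¹

section Theta

variable {n : ℕ} {R : Type} [CommRing R] (α : (Matrix (Fin n) (Fin n) R[X])ˣ)

theorem evalGL_X : evalGL n R α X = α := by
  ext i j : 4
  exact congrArg (coeff · _) (aeval_X_left_apply _)

theorem theta_eq_div (p q : R[X]) :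
    theta n R α p q = evalGL n R α (p + q) / evalGL n R α q :=
  (div_eq_mul_inv _ _).symm

theorem theta_zero_right (hα0 : evalGL n R α 0 = 1) (p : R[X]) :
    theta n R α p 0 = evalGL n R α p := by
  rw [theta_eq_div, add_zero, hα0, div_one]

end Theta

theorem dilation_telescoping_factorization_general (n : ℕ) (R : Type)
    [CommRing R]
    (α : (Matrix (Fin n) (Fin n) R[X])ˣ)
    (hα0 : evalGL n R α 0 = 1)
    (r : ℕ) (hr : 1 ≤ r) (b : ℕ → R)
    (hsum : ∑ i ∈ Finset.range r, b i = 1) :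
    α = ((List.range (r - 1)).map fun i =>
        theta n R α (C (b i) * X)
          (C (∑ j ∈ Finset.Ico (i + 1) r, b j) * X)).prod *
      theta n R α (C (b (r - 1)) * X) 0 := by
  set F : ℕ → (Matrix (Fin n) (Fin n) R[X])ˣ :=
    fun i => evalGL n R α (C (∑ j ∈ Finset.Ico i r, b j) * X)
  have hfactor : ∀ i ∈ List.range (r - 1),
      theta n R α (C (b i) * X) (C (∑ j ∈ Finset.Ico (i + 1) r, b j) * X) = F i / F (i + 1) := by
    intro i hi
    have hir : i < r := by rw [List.mem_range] at hi; omega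
    rw [theta_eq_div, ← add_mul, ← C_add, ← Finset.sum_eq_sum_Ico_succ_bot hir]
  have hF0 : F 0 = α := by
    simp only [F, ← Finset.range_eq_Ico, hsum, C_1, one_mul, evalGL_X]
  have hlast : theta n R α (C (b (r - 1)) * X) 0 = F (r - 1) := by
    simp only [F, theta_zero_right α hα0, Nat.Ico_pred_singleton hr, Finset.sum_singleton]
  rw [List.map_congr_left hfactor, List.prod_range_div', hlast, div_mul_cancel, hF0]

/-- the telescoping factorization
`α(X) = (∏_{i=1}^{r-1} θ(b_i X, T)|_{T=b_{i+1}X+⋯+b_rX}) · θ(b_r X, 0)`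
obtained from dilation data over a finite cover `s_1, …, s_r`. -/
theorem dilation_telescoping_factorization (n : ℕ) (hn : 3 ≤ n) (R : Type)
    [CommRing R] (I : Ideal R)
    (α : (Matrix (Fin n) (Fin n) R[X])ˣ)
    (hαI : ∀ i j : Fin n, ∀ k : ℕ,
      (((α : Matrix (Fin n) (Fin n) R[X]) - 1) i j).coeff k ∈ I)
    (hα0 : evalGL n R α 0 = 1)
    (r l : ℕ) (hr : 1 ≤ r) (s b : ℕ → R)
    (hs : ∀ i, i < r → ∀ m : ℕ, s i ^ m ≠ 0)
    (hcover : Ideal.span {x : R | ∃ i, i < r ∧ x = s i} = ⊤)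
    (hb : ∀ i, i < r → b i ∈ Ideal.span {s i ^ l})
    (hsum : ∑ i ∈ Finset.range r, b i = 1)
    (hdil : ∀ i, i < r → ∀ c ∈ Ideal.span {s i ^ l},
      evalGL n R α (C c * X) ∈ relEn n R[X] (I.map (C : R →+* R[X]))) :
    α = ((List.range (r - 1)).map fun i =>
        theta n R α (C (b i) * X)
          (C (∑ j ∈ Finset.Ico (i + 1) r, b j) * X)).prod *
      theta n R α (C (b (r - 1)) * X) 0 :=
  dilation_telescoping_factorization_general n R α hα0 r hr b hsum
end
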